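/- arXiv:1910.07363 — 2 statements merged into one kernel-verified Lean document; each statement's English description precedes it below -/
import Mathlib

section
/- Let f and g be functions on a set S satisfying f∘f = f∘g and g∘g = g∘f. Then for every l ≥ 1, f^{∘l}∘f^{∘l} = f^{∘l}∘g^{∘l} and g^{∘l}∘g^{∘l} = g^{∘l}∘f^{∘l}. -/
namespace Function

variable {S : Type*} {f g : S → S}

theorem iterate_succ_comp_eq_of_comp_self_eq (h : f ∘ f = f ∘ g) (n : ℕ) :
    f^[n + 1] ∘ g = f^[n + 2] := by
  rw [iterate_succ f n, comp_assoc, ← h, ← comp_assoc, ← iterate_succ, ← iterate_succ]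

theorem iterate_succ_comp_iterate_eq_of_comp_self_eq (h : f ∘ f = f ∘ g) (n m : ℕ) :
    f^[n + 1] ∘ g^[m] = f^[n + 1 + m] := by
  induction m with
  | zero => rfl
  | succ m ih =>
    rw [iterate_succ g m, ← comp_assoc, ih, Nat.add_right_comm,
      iterate_succ_comp_eq_of_comp_self_eq h]
    congr 1
    omega

end Function

theorem stmt_1 {S : Type*} (f g : S → S)
    (hf : f ∘ f = f ∘ g) (hg : g ∘ g = g ∘ f) :
    ∀ l : ℕ, 1 ≤ l →
      f^[l] ∘ f^[l] = f^[l] ∘ g^[l] ∧ g^[l] ∘ g^[l] = g^[l] ∘ f^[l] := by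
  intro l hl
  obtain ⟨n, rfl⟩ : ∃ n, l = n + 1 := ⟨l - 1, by omega⟩
  constructor
  · rw [Function.iterate_succ_comp_iterate_eq_of_comp_self_eq hf, ← Function.iterate_add]
  · rw [Function.iterate_succ_comp_iterate_eq_of_comp_self_eq hg, ← Function.iterate_add]
end

section
/- Let f and g be self-maps of a set with f∘f = f∘g and g∘g = g∘f. Then for all k ≥ 1 the pair (f^{∘k}, g^{∘k}) again satisfies the same system: f^{∘k}∘f^{∘k} = f^{∘k}∘g^{∘k} and g^{∘k}∘g^{∘k} = g^{∘k}∘f^{∘k}. -/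
private lemma aux19 {S : Type*} (f g : S → S) (hf : f ∘ f = f ∘ g) :
    ∀ n : ℕ, ∀ x, f (g^[n] x) = f (f^[n] x) := by
  intro n
  induction n with
  | zero => intro x; rfl
  | succ n ih =>
    intro x
    rw [Function.iterate_succ_apply' g, Function.iterate_succ_apply' f]
    have h1 : ∀ y, f (g y) = f (f y) := fun y => (congrFun hf y).symm
    rw [h1, ih]

private lemma aux19' {S : Type*} (f g : S → S) (hf : f ∘ f = f ∘ g) :
    ∀ k : ℕ, 1 ≤ k → f^[k] ∘ f^[k] = f^[k] ∘ g^[k] := by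
  intro k hk
  obtain ⟨m, rfl⟩ := Nat.exists_eq_add_of_le hk
  rw [add_comm]
  funext x
  show f^[m+1] (f^[m+1] x) = f^[m+1] (g^[m+1] x)
  rw [Function.iterate_succ_apply f m (g^[m+1] x), aux19 f g hf,
    ← Function.iterate_succ_apply f]

theorem stmt_19 {S : Type*} (f g : S → S)
    (hf : f ∘ f = f ∘ g) (hg : g ∘ g = g ∘ f) :
    ∀ k l : ℕ, 1 ≤ k → 1 ≤ l →
      f^[k] ∘ f^[k] = f^[k] ∘ g^[k] ∧
      f^[k] ∘ g^[l] ∘ g^[l] = f^[k] ∘ g^[l] ∘ f^[l] ∧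
      g^[k] ∘ g^[k] = g^[k] ∘ f^[k] := by
  intro k l hk hl
  exact ⟨aux19' f g hf k hk, by rw [aux19' g f hg l hl], aux19' g f hg k hk⟩
end
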